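/- Assume additionally ∑_{k=1}^∞ c_k < +∞ and fix ξ ∈ [0, 1/2). There exist constants C > 0 and A₀ > 0 such that for every a > A₀ the function ℓ_a has a zero μ⁺(a) in the upper half-plane satisfying |Re μ⁺(a) + (1/2) a^{−2(1−ξ)} ∑_{j=1}^∞ c_j| ≤ C a^{−2(1−ξ)} and |Im μ⁺(a) − a| ≤ C a^{−(1−2ξ)}; moreover the complex conjugate of μ⁺(a) is also a zero of ℓ_a. -/

import Mathlib

/-!
Write `ℓ_a(ζ) = ζ² + a² - r F(ζ)` with `r = a^{2ξ}` and `F(ζ) = ∑ c_k / (ζ + γ_k)`. On the disc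
`|ζ - i a| ≤ 1` one has `Im ζ ≥ a / 2`, so `F = O(1/a)` and `F` is `O(1/a²)`-Lipschitz, with
constants `∑ c_k`. Since `ζ² + a² = (ζ - i a)(ζ + i a)`, the zeros of `ℓ_a` there are the fixed
points of `ζ ↦ i a + r F(ζ) / (ζ + i a)`, which for large `a` is a contraction of the disc
(this uses `r ≤ a`, i.e. `ξ ≤ 1/2`). Its fixed point `μ` satisfies `|μ - i a| ≤ 2 (∑ c_k) r / a²`,
which gives both estimates, and `conj μ` is a zero because `ℓ_a` has real coefficients.
-/

open Complex ComplexConjugate Metric Set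

lemma Complex.sub_le_im_of_mem_closedBall {z ζ : ℂ} {ρ : ℝ} (h : ζ ∈ closedBall z ρ) :
    z.im - ρ ≤ ζ.im := by
  have := (abs_le.mp ((abs_im_le_norm (ζ - z)).trans (mem_closedBall_iff_norm.mp h))).1
  rw [sub_im] at this
  linarith

lemma Complex.im_le_norm_add_ofReal (ζ : ℂ) (x : ℝ) : ζ.im ≤ ‖ζ + x‖ := by
  simpa using im_le_norm (ζ + x)

lemma norm_div_sub_div_le {𝕜 : Type*} [NormedField 𝕜] {u v : 𝕜} (hu : u ≠ 0) (hv : v ≠ 0)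
    (x y : 𝕜) : ‖x / u - y / v‖ ≤ ‖x - y‖ / ‖u‖ + ‖y‖ * ‖u - v‖ / (‖u‖ * ‖v‖) := by
  have h : x / u - y / v = (x - y) / u - y * (u - v) / (u * v) := by
    field_simp
    ring
  rw [h, ← norm_mul, ← norm_mul, ← norm_div, ← norm_div]
  exact norm_sub_le _ _

lemma le_norm_add_I_mul_of_mem_closedBall {a : ℝ} {ζ : ℂ} (ha : 1 ≤ a)
    (hζ : ζ ∈ closedBall (I * a) 1) : a ≤ ‖ζ + I * a‖ := by
  have := sub_le_im_of_mem_closedBall hζ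
  have := im_le_norm (ζ + I * a)
  simp only [add_im, mul_im, I_re, I_im, ofReal_re, ofReal_im] at *
  linarith

theorem exists_sq_add_sq_eq_of_contraction {a B L : ℝ} (ha : 1 ≤ a) {F : ℂ → ℂ}
    (hB : ∀ ζ ∈ closedBall (I * a) 1, ‖F ζ‖ ≤ B)
    (hL : ∀ ζ ∈ closedBall (I * a) 1, ∀ ζ' ∈ closedBall (I * a) 1,
      ‖F ζ - F ζ'‖ ≤ L * ‖ζ - ζ'‖)
    (hBa : B ≤ a) (hLa : L + B / a ≤ a / 2) :
    ∃ μ ∈ closedBall (I * a) (B / a), μ ^ 2 + a ^ 2 = F μ := by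
  set K := closedBall (I * a) 1
  set Φ : ℂ → ℂ := fun ζ => I * a + F ζ / (ζ + I * a)
  have ha0 : 0 < a := one_pos.trans_le ha
  have hden : ∀ ζ ∈ K, a ≤ ‖ζ + I * a‖ := fun ζ hζ => le_norm_add_I_mul_of_mem_closedBall ha hζ
  have hden0 : ∀ ζ ∈ K, ζ + I * a ≠ 0 := fun ζ hζ => norm_pos_iff.mp (ha0.trans_le (hden ζ hζ))
  have hΦ : ∀ ζ ∈ K, ‖Φ ζ - I * a‖ ≤ B / a := fun ζ hζ => by
    rw [add_sub_cancel_left, norm_div]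
    exact div_le_div₀ ((norm_nonneg _).trans (hB ζ hζ)) (hB ζ hζ) ha0 (hden ζ hζ)
  have hmaps : MapsTo Φ K K := fun ζ hζ =>
    mem_closedBall_iff_norm.mpr ((hΦ ζ hζ).trans ((div_le_one ha0).mpr hBa))
  have hlip : LipschitzOnWith (1 / 2) Φ K := by
    refine LipschitzOnWith.of_dist_le_mul fun ζ hζ ζ' hζ' => ?_
    have hB0 : 0 ≤ B := (norm_nonneg (F ζ)).trans (hB ζ hζ)
    have hLζ := hL ζ hζ ζ' hζ'
    have hBζ' := hB ζ' hζ'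
    have hu := hden ζ hζ
    have hv := hden ζ' hζ'
    rw [dist_eq_norm, dist_eq_norm, add_sub_add_left_eq_sub]
    calc _ ≤ ‖F ζ - F ζ'‖ / ‖ζ + I * a‖
          + ‖F ζ'‖ * ‖ζ + I * a - (ζ' + I * a)‖ / (‖ζ + I * a‖ * ‖ζ' + I * a‖) :=
          norm_div_sub_div_le (hden0 ζ hζ) (hden0 ζ' hζ') _ _
      _ ≤ L * ‖ζ - ζ'‖ / a + B * ‖ζ - ζ'‖ / (a * a) := by
          rw [add_sub_add_right_eq_sub]
          gcongr
          exact (norm_nonneg _).trans hLζ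
      _ = (L + B / a) / a * ‖ζ - ζ'‖ := by field_simp
      _ ≤ (a / 2) / a * ‖ζ - ζ'‖ := by gcongr
      _ = _ := by push_cast; field_simp
  have hcontr : ContractingWith (1 / 2) (hmaps.restrict Φ K K) :=
    ⟨by norm_num, hlip.mapsToRestrict hmaps⟩
  obtain ⟨μ, hμK, hμ, -⟩ := hcontr.exists_fixedPoint' isClosed_closedBall.isComplete hmaps
    (mem_closedBall_self zero_le_one) (edist_ne_top _ _)
  refine ⟨μ, mem_closedBall_iff_norm.mpr (hμ ▸ hΦ μ hμK), ?_⟩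
  have hμ' : F μ / (μ + I * a) = μ - I * a := eq_sub_of_add_eq' hμ.eq
  rw [div_eq_iff (hden0 μ hμK)] at hμ'
  linear_combination (-1 : ℂ) * hμ' + (a : ℂ) ^ 2 * I_sq

noncomputable def resolventSum (c γ : ℕ → ℝ) (ζ : ℂ) : ℂ := ∑' k, (c k : ℂ) / (ζ + γ k)

lemma norm_ofReal_div_add_ofReal_le {x y δ : ℝ} {ζ : ℂ} (hx : 0 ≤ x) (hδ : 0 < δ)
    (hζ : δ ≤ ζ.im) : ‖(x : ℂ) / (ζ + y)‖ ≤ x / δ := by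
  rw [norm_div, norm_real, Real.norm_of_nonneg hx]
  exact div_le_div_of_nonneg_left hx hδ (hζ.trans (im_le_norm_add_ofReal ζ y))

lemma norm_ofReal_div_add_ofReal_sub_le {x y δ : ℝ} {ζ ζ' : ℂ} (hx : 0 ≤ x) (hδ : 0 < δ)
    (hζ : δ ≤ ζ.im) (hζ' : δ ≤ ζ'.im) :
    ‖(x : ℂ) / (ζ + y) - x / (ζ' + y)‖ ≤ x / δ ^ 2 * ‖ζ - ζ'‖ := by
  have hu := hζ.trans (im_le_norm_add_ofReal ζ y)
  have hv := hζ'.trans (im_le_norm_add_ofReal ζ' y)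
  have hdiff : (x : ℂ) / (ζ + y) - x / (ζ' + y) = x * (ζ' - ζ) / ((ζ + y) * (ζ' + y)) := by
    field_simp [norm_pos_iff.mp (hδ.trans_le hu), norm_pos_iff.mp (hδ.trans_le hv)]
    ring
  rw [hdiff, norm_div, norm_mul, norm_mul, norm_real, Real.norm_of_nonneg hx, norm_sub_rev,
    div_mul_eq_mul_div, sq]
  gcongr

section resolventSum

variable {c : ℕ → ℝ} (γ : ℕ → ℝ) {δ : ℝ} {ζ ζ' : ℂ}
variable (hc : ∀ k, 0 ≤ c k) (hcs : Summable c)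
include hc hcs

lemma summable_div_add_ofReal (hδ : 0 < δ) (hζ : δ ≤ ζ.im) :
    Summable fun k => (c k : ℂ) / (ζ + γ k) :=
  Summable.of_norm_bounded (hcs.div_const δ) fun k => norm_ofReal_div_add_ofReal_le (hc k) hδ hζ

lemma norm_resolventSum_le (hδ : 0 < δ) (hζ : δ ≤ ζ.im) :
    ‖resolventSum c γ ζ‖ ≤ (∑' k, c k) / δ :=
  tsum_of_norm_bounded (hcs.hasSum.div_const δ) fun k => norm_ofReal_div_add_ofReal_le (hc k) hδ hζ

lemma norm_resolventSum_sub_le (hδ : 0 < δ) (hζ : δ ≤ ζ.im) (hζ' : δ ≤ ζ'.im) :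
    ‖resolventSum c γ ζ - resolventSum c γ ζ'‖ ≤ (∑' k, c k) / δ ^ 2 * ‖ζ - ζ'‖ := by
  rw [resolventSum, resolventSum, ← (summable_div_add_ofReal γ hc hcs hδ hζ).tsum_sub
    (summable_div_add_ofReal γ hc hcs hδ hζ')]
  exact tsum_of_norm_bounded ((hcs.hasSum.div_const _).mul_right _)
    fun k => norm_ofReal_div_add_ofReal_sub_le (hc k) hδ hζ hζ'

end resolventSum

noncomputable def symbol (c γ : ℕ → ℝ) (r a : ℝ) (ζ : ℂ) : ℂ :=
  ζ ^ 2 + a ^ 2 - r * resolventSum c γ ζ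

lemma symbol_conj (c γ : ℕ → ℝ) (r a : ℝ) (ζ : ℂ) :
    symbol c γ r a (conj ζ) = conj (symbol c γ r a ζ) := by
  simp [symbol, resolventSum, conj_tsum, map_div₀]

theorem exists_symbol_eq_zero_near_I_mul {c : ℕ → ℝ} (γ : ℕ → ℝ) (hc : ∀ k, 0 ≤ c k)
    (hcs : Summable c) {r a : ℝ} (hr : 0 ≤ r) (hra : r ≤ a) (ha : 12 * ∑' k, c k + 2 ≤ a) :
    ∃ μ, ‖μ - I * a‖ ≤ 2 * (∑' k, c k) * (r / a ^ 2) ∧ symbol c γ r a μ = 0 := by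
  set T := ∑' k, c k
  have hT : 0 ≤ T := tsum_nonneg hc
  have ha0 : 0 < a := by linarith
  have him : ∀ ζ ∈ closedBall (I * a) 1, a / 2 ≤ ζ.im := fun ζ hζ => by
    have := sub_le_im_of_mem_closedBall hζ
    simp only [mul_im, I_re, I_im, ofReal_re, ofReal_im] at this
    linarith
  obtain ⟨μ, hμ, hroot⟩ := exists_sq_add_sq_eq_of_contraction (a := a) (B := 2 * T * r / a)
    (L := 4 * T * r / a ^ 2) (F := fun ζ => (r : ℂ) * resolventSum c γ ζ) (by linarith)
    (fun ζ hζ => by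
      rw [norm_mul, norm_real, Real.norm_of_nonneg hr]
      calc r * ‖resolventSum c γ ζ‖ ≤ r * (T / (a / 2)) := by
            gcongr
            exact norm_resolventSum_le γ hc hcs (by positivity) (him ζ hζ)
        _ = 2 * T * r / a := by ring)
    (fun ζ hζ ζ' hζ' => by
      rw [← mul_sub, norm_mul, norm_real, Real.norm_of_nonneg hr]
      calc r * ‖resolventSum c γ ζ - resolventSum c γ ζ'‖
          ≤ r * (T / (a / 2) ^ 2 * ‖ζ - ζ'‖) := by
            gcongr
            exact norm_resolventSum_sub_le γ hc hcs (by positivity) (him ζ hζ) (him ζ' hζ')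
        _ = 4 * T * r / a ^ 2 * ‖ζ - ζ'‖ := by ring)
    (by rw [div_le_iff₀ ha0]; nlinarith)
    -- `L + B / a = 6 T r / a² ≤ 6 T / a`, which is `≤ a / 2` since `12 T ≤ a ≤ a²`
    (by rw [div_div, ← sq, ← add_div, div_le_iff₀ (by positivity)]; nlinarith)
  refine ⟨μ, ?_, by rw [symbol, ← hroot]; ring⟩
  convert mem_closedBall_iff_norm.mp hμ using 1
  ring

theorem stmt_14_general
    (c γs : ℕ → ℝ)
    (hc : ∀ j, 0 < c j)
    (hcsum : Summable c)
    (ξ : ℝ) (hξ1 : ξ < 1 / 2)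
    (ℓ : ℝ → ℂ → ℂ)
    (hℓ : ∀ a : ℝ, ∀ ζ : ℂ, ℓ a ζ = ζ ^ 2 + (a : ℂ) ^ 2
        - ((a ^ (2 * ξ) : ℝ) : ℂ) * ∑' k, (c k : ℂ) / (ζ + (γs k : ℂ))) :
    ∃ C : ℝ, 0 < C ∧ ∃ A₀ : ℝ, 0 < A₀ ∧ ∀ a : ℝ, A₀ < a →
      ∃ μ : ℂ, ℓ a μ = 0 ∧ 0 < μ.im ∧
        |μ.re + (1 / 2) * a ^ (-(2 * (1 - ξ))) * ∑' j, c j| ≤ C * a ^ (-(2 * (1 - ξ))) ∧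
        |μ.im - a| ≤ C * a ^ (-(1 - 2 * ξ)) ∧
        ℓ a ((starRingEnd ℂ) μ) = 0 := by
  set T := ∑' j, c j
  have hT : 0 ≤ T := tsum_nonneg fun j => (hc j).le
  refine ⟨3 * T + 1, by positivity, 12 * T + 2, by positivity, fun a ha => ?_⟩
  have ha0 : 0 < a := by linarith
  have hra : a ^ (2 * ξ) ≤ a :=
    (Real.rpow_le_rpow_of_exponent_le (by linarith) (by linarith)).trans_eq (Real.rpow_one a)
  have hP : a ^ (-(2 * (1 - ξ))) = a ^ (2 * ξ) / a ^ 2 := by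
    rw [show -(2 * (1 - ξ)) = 2 * ξ - 2 by ring, Real.rpow_sub ha0, Real.rpow_two]
  have hPQ : a ^ (2 * ξ) / a ^ 2 ≤ a ^ (-(1 - 2 * ξ)) :=
    hP ▸ Real.rpow_le_rpow_of_exponent_le (by linarith) (by linarith)
  have hεa : 2 * T * (a ^ (2 * ξ) / a ^ 2) < a := by
    rw [mul_div_assoc', div_lt_iff₀ (by positivity)]
    nlinarith
  have hℓa : ℓ a = symbol c γs (a ^ (2 * ξ)) a := funext (hℓ a)
  obtain ⟨μ, hμ, hzero⟩ := exists_symbol_eq_zero_near_I_mul γs (fun j => (hc j).le) hcsum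
    (by positivity) hra ha.le
  have hre : |μ.re| ≤ 2 * T * (a ^ (2 * ξ) / a ^ 2) := by simpa using (abs_re_le_norm _).trans hμ
  have him : |μ.im - a| ≤ 2 * T * (a ^ (2 * ξ) / a ^ 2) := by
    simpa using (abs_im_le_norm _).trans hμ
  refine ⟨μ, hℓa ▸ hzero, by linarith [(abs_le.mp him).1], ?_, ?_, ?_⟩
  · have hP0 : 0 ≤ a ^ (2 * ξ) / a ^ 2 := by positivity
    rw [hP]
    calc _ ≤ |μ.re| + |1 / 2 * (a ^ (2 * ξ) / a ^ 2) * T| := abs_add_le _ _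
      _ = |μ.re| + 1 / 2 * (a ^ (2 * ξ) / a ^ 2) * T := by
          rw [abs_of_nonneg (mul_nonneg (by positivity) hT)]
      _ ≤ _ := by nlinarith [mul_nonneg hT hP0]
  · exact him.trans (by gcongr; linarith)
  · rw [hℓa, symbol_conj, hzero, map_zero]

/-- Assume additionally `∑ₖ c k < ∞` and fix `ξ ∈ [0, 1/2)`. There are
`C > 0` and `A₀ > 0` such that for every `a > A₀` the symbol `ℓ_a` has a zero `μ⁺(a)` in
the upper half-plane with `|Re μ⁺(a) + (1/2) a^(-2(1-ξ)) ∑ⱼ c j| ≤ C a^(-2(1-ξ))` and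
`|Im μ⁺(a) - a| ≤ C a^(-(1-2ξ))`, and its complex conjugate is also a zero of `ℓ_a`.
(Indexing is `0`-based: `c 0, γ 0` correspond to `c_1, γ_1`.) -/
theorem stmt_14
    (c γs : ℕ → ℝ)
    (hc : ∀ j, 0 < c j)
    (hγ0 : 0 < γs 0)
    (hγmono : StrictMono γs)
    (hγtop : Filter.Tendsto γs Filter.atTop Filter.atTop)
    (hSsum : Summable fun j => c j / γs j)
    (hS : (∑' j, c j / γs j) < 1)
    (hcsum : Summable c)
    (ξ : ℝ) (hξ0 : 0 ≤ ξ) (hξ1 : ξ < 1 / 2)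
    (ℓ : ℝ → ℂ → ℂ)
    (hℓ : ∀ a : ℝ, ∀ ζ : ℂ, ℓ a ζ = ζ ^ 2 + (a : ℂ) ^ 2
        - ((a ^ (2 * ξ) : ℝ) : ℂ) * ∑' k, (c k : ℂ) / (ζ + (γs k : ℂ))) :
    ∃ C : ℝ, 0 < C ∧ ∃ A₀ : ℝ, 0 < A₀ ∧ ∀ a : ℝ, A₀ < a →
      ∃ μ : ℂ, ℓ a μ = 0 ∧ 0 < μ.im ∧
        |μ.re + (1 / 2) * a ^ (-(2 * (1 - ξ))) * ∑' j, c j| ≤ C * a ^ (-(2 * (1 - ξ))) ∧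
        |μ.im - a| ≤ C * a ^ (-(1 - 2 * ξ)) ∧
        ℓ a ((starRingEnd ℂ) μ) = 0 :=
  stmt_14_general c γs hc hcsum ξ hξ1 ℓ hℓ
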